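/- Let M = m₁ + m₂e₂ + m₃e₃ + m₄e₄ ∈ H(α,β) with w(M) = α m₂² + β m₃² + αβ m₄² > 0 and 0 < √(w(M)) < π/2. Let E = x₁ + x₂e₂ + x₃e₃ + x₄e₄ be the unique element with Matrix.exp(L(M)) = L(E). Then the logarithm formula recovers M: x₁ > 0, w(E) = α x₂² + β x₃² + αβ x₄² > 0, and (1/2)·ln(x₁² + w(E)) + ( arctan(√(w(E))/x₁) / √(w(E)) )·(x₂e₂ + x₃e₃ + x₄e₄) = M. -/

import Mathlib

open Quaternion Matrix Real

/-- The standard basis `(1, e₂, e₃, e₄)` of `H(α,β) = ℍ[ℝ, -α, -β]`. -/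
noncomputable def gqBasis (α β : ℝ) : Fin 4 → ℍ[ℝ, -α, -β] :=
  ![1, ⟨0, 1, 0, 0⟩, ⟨0, 0, 1, 0⟩, ⟨0, 0, 0, 1⟩]

/-- The coordinates of a generalized quaternion with respect to `(1, e₂, e₃, e₄)`. -/
def gqCoord {α β : ℝ} (q : ℍ[ℝ, -α, -β]) : Fin 4 → ℝ :=
  ![q.re, q.imI, q.imJ, q.imK]

/-- `L M`: the matrix of left multiplication by `M` in the basis `(1, e₂, e₃, e₄)`. -/
noncomputable def L (α β : ℝ) (M : ℍ[ℝ, -α, -β]) : Matrix (Fin 4) (Fin 4) ℝ :=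
  Matrix.of fun i j => gqCoord (M * gqBasis α β j) i

/-- `w(X) = α x₂² + β x₃² + αβ x₄²`. -/
def w {α β : ℝ} (X : ℍ[ℝ, -α, -β]) : ℝ :=
  α * X.imI ^ 2 + β * X.imJ ^ 2 + α * β * X.imK ^ 2

set_option maxHeartbeats 1000000 in
lemma gqL_eq (α β : ℝ) (M : ℍ[ℝ, -α, -β]) :
    L α β M = !![M.re, -α*M.imI, -β*M.imJ, -(α*β)*M.imK;
                 M.imI, M.re, -β*M.imK, β*M.imJ;
                 M.imJ, α*M.imK, M.re, -α*M.imI;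
                 M.imK, -M.imJ, M.imI, M.re] := by
  ext i j
  fin_cases i <;> fin_cases j <;> · simp [L, gqBasis, gqCoord]; try ring

set_option maxHeartbeats 1000000 in
lemma gqL_one (α β : ℝ) : L α β 1 = 1 := by
  rw [gqL_eq]
  ext i j
  fin_cases i <;> fin_cases j <;>
    simp [Matrix.one_apply, Matrix.vecHead, Matrix.vecTail]

set_option maxHeartbeats 1000000 in
lemma gqL_mul (α β : ℝ) (p q : ℍ[ℝ, -α, -β]) : L α β (p * q) = L α β p * L α β q := by
  simp only [gqL_eq]
  ext i j
  fin_cases i <;> fin_cases j <;>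
    · simp [Matrix.mul_apply, Fin.sum_univ_four]
      ring

set_option maxHeartbeats 1000000 in
lemma gqL_add (α β : ℝ) (p q : ℍ[ℝ, -α, -β]) : L α β (p + q) = L α β p + L α β q := by
  simp only [gqL_eq]
  ext i j
  fin_cases i <;> fin_cases j <;> · simp <;> try ring

set_option maxHeartbeats 1000000 in
lemma gqL_smul (α β : ℝ) (r : ℝ) (p : ℍ[ℝ, -α, -β]) : L α β (r • p) = r • L α β p := by
  simp only [gqL_eq]
  ext i j
  fin_cases i <;> fin_cases j <;> · simp <;> try ring

lemma gqL_inj (α β : ℝ) {p q : ℍ[ℝ, -α, -β]} (h : L α β p = L α β q) : p = q := by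
  rw [gqL_eq, gqL_eq] at h
  have h0 := congrFun (congrFun h 0) 0
  have h1 := congrFun (congrFun h 1) 0
  have h2 := congrFun (congrFun h 2) 0
  have h3 := congrFun (congrFun h 3) 0
  simp at h0 h1 h2 h3
  exact QuaternionAlgebra.ext h0 h1 h2 h3

/-- exp of an element whose square is `-θ² • 1`. -/
lemma gq_exp_of_sq {𝔸 : Type*} [NormedRing 𝔸] [NormedAlgebra ℝ 𝔸] [CompleteSpace 𝔸]
    (a : 𝔸) (θ : ℝ) (hθ : θ ≠ 0) (h : a ^ 2 = (-(θ ^ 2)) • 1) :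
    NormedSpace.exp a = Real.cos θ • 1 + (Real.sin θ / θ) • a := by
  have hpow : ∀ k : ℕ, a ^ (2 * k) = ((-1 : ℝ) ^ k * θ ^ (2 * k)) • (1 : 𝔸) := by
    intro k
    rw [pow_mul, h, smul_pow, one_pow, neg_pow, pow_mul]
  rw [NormedSpace.exp_eq_tsum ℝ]
  refine HasSum.tsum_eq ?_
  refine HasSum.even_add_odd ?_ ?_
  · have key : ∀ k : ℕ, ((Nat.factorial (2 * k) : ℝ)⁻¹) • a ^ (2 * k)
        = ((-1 : ℝ) ^ k * θ ^ (2 * k) / Nat.factorial (2 * k)) • (1 : 𝔸) := by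
      intro k
      rw [hpow, smul_smul]
      congr 1
      ring
    simp only [key]
    exact (Real.hasSum_cos θ).smul_const 1
  · have key : ∀ k : ℕ, ((Nat.factorial (2 * k + 1) : ℝ)⁻¹) • a ^ (2 * k + 1)
        = (((-1 : ℝ) ^ k * θ ^ (2 * k + 1) / Nat.factorial (2 * k + 1)) / θ) • a := by
      intro k
      rw [pow_succ, hpow, smul_mul_assoc, one_mul, smul_smul]
      congr 1
      rw [pow_succ]
      field_simp
    simp only [key]
    exact ((Real.hasSum_sin θ).div_const θ).smul_const a

/-- If `w(M) > 0` and `0 < √(w(M)) < π/2`, then the logarithm formula applied to the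
exponential `E` of `M` (the unique `E` with `exp (L(M)) = L(E)`) recovers `M`. -/
theorem log_exp_of_w_pos (α β : ℝ) (M : ℍ[ℝ, -α, -β])
    (hw : 0 < w M) (hsq : 0 < Real.sqrt (w M)) (hsq' : Real.sqrt (w M) < Real.pi / 2)
    (E : ℍ[ℝ, -α, -β]) (hE : NormedSpace.exp (L α β M) = L α β E) :
    0 < E.re ∧ 0 < w E ∧
      ((1 / 2) * Real.log (E.re ^ 2 + w E)) • 1 +
        (Real.arctan (Real.sqrt (w E) / E.re) / Real.sqrt (w E)) •
          (⟨0, E.imI, E.imJ, E.imK⟩ : ℍ[ℝ, -α, -β]) = M := by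
  letI : SeminormedRing (Matrix (Fin 4) (Fin 4) ℝ) := Matrix.linftyOpSemiNormedRing
  letI : NormedRing (Matrix (Fin 4) (Fin 4) ℝ) := Matrix.linftyOpNormedRing
  letI : NormedAlgebra ℝ (Matrix (Fin 4) (Fin 4) ℝ) := Matrix.linftyOpNormedAlgebra
  set θ : ℝ := Real.sqrt (w M) with hθdef
  have hθ : θ ≠ 0 := ne_of_gt hsq
  have hθsq : θ ^ 2 = w M := Real.sq_sqrt hw.le
  set V : ℍ[ℝ, -α, -β] := ⟨0, M.imI, M.imJ, M.imK⟩ with hV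
  have hM : M = M.re • 1 + V := by
    ext <;> simp [hV]
  have hV2 : V * V = (-(θ ^ 2)) • (1 : ℍ[ℝ, -α, -β]) := by
    rw [hθsq]
    ext <;> simp [hV, w] <;> ring
  have hLV2 : (L α β V) ^ 2 = (-(θ ^ 2)) • (1 : Matrix (Fin 4) (Fin 4) ℝ) := by
    rw [pow_two, ← gqL_mul, hV2, gqL_smul, gqL_one]
  set s : ℝ := Real.sin θ / θ with hs
  set t : ℝ := Real.exp M.re with ht
  have hexp : NormedSpace.exp (L α β M)
      = L α β (t • (Real.cos θ • 1 + s • V)) := by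
    conv_lhs => rw [hM, gqL_add, gqL_smul, gqL_one]
    rw [Matrix.exp_add_of_commute _ _ ((Commute.one_left _).smul_left _)]
    have h1 : NormedSpace.exp (M.re • (1 : Matrix (Fin 4) (Fin 4) ℝ)) = t • 1 := by
      rw [← Algebra.algebraMap_eq_smul_one]
      erw [← NormedSpace.algebraMap_exp_comm]
      rw [← Real.exp_eq_exp_ℝ, Algebra.algebraMap_eq_smul_one]
    rw [h1]
    erw [gq_exp_of_sq (L α β V) θ hθ hLV2]
    rw [gqL_smul, gqL_add, gqL_smul, gqL_smul, gqL_one,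
      smul_mul_assoc, one_mul]
  have hEeq : E = t • (Real.cos θ • 1 + s • V) := gqL_inj α β (hE.symm.trans hexp)
  -- component values
  have hre : E.re = t * Real.cos θ := by rw [hEeq]; simp [hV]
  have hi : E.imI = t * s * M.imI := by rw [hEeq]; simp [hV]; ring
  have hj : E.imJ = t * s * M.imJ := by rw [hEeq]; simp [hV]; ring
  have hk : E.imK = t * s * M.imK := by rw [hEeq]; simp [hV]; ring
  have ht0 : 0 < t := Real.exp_pos _
  have hπ : θ < Real.pi := lt_trans hsq' (by linarith [Real.pi_pos])
  have hsin : 0 < Real.sin θ := Real.sin_pos_of_pos_of_lt_pi hsq hπ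
  have hcos : 0 < Real.cos θ := Real.cos_pos_of_mem_Ioo ⟨by linarith [Real.pi_pos], hsq'⟩
  have hwE : w E = (t * Real.sin θ) ^ 2 := by
    have h1 : w E = (t * s) ^ 2 * w M := by
      simp only [w, hi, hj, hk]; ring
    rw [h1, ← hθsq, hs]
    field_simp
  have hEre : 0 < E.re := by rw [hre]; positivity
  have hwEpos : 0 < w E := by rw [hwE]; positivity
  refine ⟨hEre, hwEpos, ?_⟩
  have hsqwE : Real.sqrt (w E) = t * Real.sin θ := by
    rw [hwE, Real.sqrt_sq (by positivity)]
  have hlog : (1 / 2) * Real.log (E.re ^ 2 + w E) = M.re := by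
    have h2 : E.re ^ 2 + w E = t ^ 2 := by
      rw [hre, hwE]
      have h := Real.sin_sq_add_cos_sq θ
      nlinarith [h]
    rw [h2, Real.log_pow, ht, Real.log_exp]
    push_cast
    ring
  have harctan : Real.arctan (Real.sqrt (w E) / E.re) = θ := by
    rw [hsqwE, hre]
    have : t * Real.sin θ / (t * Real.cos θ) = Real.tan θ := by
      rw [Real.tan_eq_sin_div_cos]
      field_simp
    rw [this, Real.arctan_tan (by linarith [Real.pi_pos]) hsq']
  rw [hlog, harctan, hsqwE]
  have hsin' : Real.sin θ ≠ 0 := ne_of_gt hsin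
  have ht' : t ≠ 0 := ne_of_gt ht0
  ext
  · simp
  · simp [hi, hs]
    field_simp
  · simp [hj, hs]
    field_simp
  · simp [hk, hs]
    field_simp
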